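/- Let f : I → ℝ³ be a smooth unit speed space-like curve on S²₁ (⟨f,f⟩ = 1, ⟨f',f'⟩ = 1) with Sabban frame {f, t, s} and geodesic curvature κ_g, and assume κ_g(v)² > 1 and tanh(ξ₁)·κ_g(v) < 1 for all v. Let a > 0, ξ₁ ∈ ℝ be constants and γ(v) = a·∫₀ᵛ f(t)dt + a·tanh(ξ₁)·∫₀ᵛ f(t) × f'(t) dt, with κ and τ given by κ = ‖γ' × γ''‖ / ⟨γ', γ'⟩^{3/2} and τ = det(γ', γ'', γ''') / ‖γ' × γ''‖². Define T(v) = γ'(v)/‖γ'(v)‖, N(v) = t(v), B(v) = N(v) × T(v), and the Darboux vector D(v) = −τ(v)·T(v) + κ(v)·B(v). Then D(v) is space-like and non-zero, and D(v)/‖D(v)‖ = (−κ_g(v)·f(v) − s(v))/√(κ_g(v)² − 1) = d_f(v); that is, the de Sitter Darboux indicatrix of γ equals the de Sitter evolute of f. -/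

import Mathlib

noncomputable section

open Real

/-- The Lorentzian (Minkowski) inner product on ℝ³: ⟨x,y⟩ = x₁y₁ + x₂y₂ − x₃y₃. -/
def mink (x y : Fin 3 → ℝ) : ℝ := x 0 * y 0 + x 1 * y 1 - x 2 * y 2

/-- The Lorentzian cross product on ℝ³:
x × y = (x₂y₃ − x₃y₂, x₃y₁ − x₁y₃, x₂y₁ − x₁y₂). -/
def mcross (x y : Fin 3 → ℝ) : Fin 3 → ℝ :=
  ![x 1 * y 2 - x 2 * y 1, x 2 * y 0 - x 0 * y 2, x 1 * y 0 - x 0 * y 1]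

/-- Determinant of three vectors in ℝ³ (as the rows of a 3×3 matrix). -/
def mdet (x y z : Fin 3 → ℝ) : ℝ := Matrix.det (Matrix.of ![x, y, z])

/-- The pseudo norm ‖x‖ = √|⟨x,x⟩|. -/
def mnorm (x : Fin 3 → ℝ) : ℝ := Real.sqrt |mink x x|

lemma mink_comm (x y : Fin 3 → ℝ) : mink x y = mink y x := by simp only [mink]; ring
lemma mink_add_left (x y z : Fin 3 → ℝ) : mink (x + y) z = mink x z + mink y z := by
  simp only [mink, Pi.add_apply]; ring
lemma mink_add_right (x y z : Fin 3 → ℝ) : mink x (y + z) = mink x y + mink x z := by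
  simp only [mink, Pi.add_apply]; ring
lemma mink_smul_left (r : ℝ) (x y : Fin 3 → ℝ) : mink (r • x) y = r * mink x y := by
  simp only [mink, Pi.smul_apply, smul_eq_mul]; ring
lemma mink_smul_right (r : ℝ) (x y : Fin 3 → ℝ) : mink x (r • y) = r * mink x y := by
  simp only [mink, Pi.smul_apply, smul_eq_mul]; ring
lemma mink_neg_left (x y : Fin 3 → ℝ) : mink (-x) y = -mink x y := by
  simp only [mink, Pi.neg_apply]; ring
lemma mink_neg_right (x y : Fin 3 → ℝ) : mink x (-y) = -mink x y := by
  simp only [mink, Pi.neg_apply]; ring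
lemma mink_sub_left (x y z : Fin 3 → ℝ) : mink (x - y) z = mink x z - mink y z := by
  simp only [mink, Pi.sub_apply]; ring
lemma mink_sub_right (x y z : Fin 3 → ℝ) : mink x (y - z) = mink x y - mink x z := by
  simp only [mink, Pi.sub_apply]; ring
lemma mink_zero_left (y : Fin 3 → ℝ) : mink 0 y = 0 := by simp [mink]

lemma mcross_apply (x y : Fin 3 → ℝ) : mcross x y 0 = x 1 * y 2 - x 2 * y 1 ∧
    mcross x y 1 = x 2 * y 0 - x 0 * y 2 ∧ mcross x y 2 = x 1 * y 0 - x 0 * y 1 := by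
  refine ⟨rfl, rfl, rfl⟩

lemma mcross_add_left (x y z : Fin 3 → ℝ) : mcross (x + y) z = mcross x z + mcross y z := by
  funext i; fin_cases i <;> simp [mcross] <;> ring
lemma mcross_add_right (x y z : Fin 3 → ℝ) : mcross x (y + z) = mcross x y + mcross x z := by
  funext i; fin_cases i <;> simp [mcross] <;> ring
lemma mcross_smul_left (r : ℝ) (x y : Fin 3 → ℝ) : mcross (r • x) y = r • mcross x y := by
  funext i; fin_cases i <;> simp [mcross] <;> ring
lemma mcross_smul_right (r : ℝ) (x y : Fin 3 → ℝ) : mcross x (r • y) = r • mcross x y := by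
  funext i; fin_cases i <;> simp [mcross] <;> ring
lemma mcross_neg_left (x y : Fin 3 → ℝ) : mcross (-x) y = -mcross x y := by
  funext i; fin_cases i <;> simp [mcross] <;> ring
lemma mcross_neg_right (x y : Fin 3 → ℝ) : mcross x (-y) = -mcross x y := by
  funext i; fin_cases i <;> simp [mcross] <;> ring
lemma mcross_sub_right (x y z : Fin 3 → ℝ) : mcross x (y - z) = mcross x y - mcross x z := by
  funext i; fin_cases i <;> simp [mcross] <;> ring
lemma mcross_self (x : Fin 3 → ℝ) : mcross x x = 0 := by
  funext i; fin_cases i <;> simp [mcross] <;> ring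
lemma mcross_anticomm (x y : Fin 3 → ℝ) : mcross x y = -mcross y x := by
  funext i; fin_cases i <;> simp [mcross] <;> ring

lemma mink_mcross_mdet (x y z : Fin 3 → ℝ) : mink (mcross x y) z = mdet x y z := by
  simp [mdet, Matrix.det_fin_three, mink, mcross]; ring
lemma mink_mcross_self_left (x y : Fin 3 → ℝ) : mink (mcross x y) x = 0 := by
  simp only [mink, mcross]; simp; ring
lemma mink_mcross_self_right (x y : Fin 3 → ℝ) : mink (mcross x y) y = 0 := by
  simp only [mink, mcross]; simp; ring
lemma mcross_triple (x y z : Fin 3 → ℝ) :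
    mcross x (mcross y z) = mink x y • z - mink x z • y := by
  funext i; fin_cases i <;> simp [mcross, mink] <;> ring
lemma mink_mcross_mcross (x y z : Fin 3 → ℝ) :
    mink (mcross x y) (mcross x z) = mink x y * mink x z - mink x x * mink y z := by
  simp only [mink, mcross]; simp; ring
lemma mdet_cramer (x y z w : Fin 3 → ℝ) :
    (mdet x y z) • w = mink w x • mcross y z + mink w y • mcross z x + mink w z • mcross x y := by
  funext i; fin_cases i <;>
    simp [mdet, Matrix.det_fin_three, mink, mcross] <;> ring

lemma hasDerivAt_mink {x y : ℝ → Fin 3 → ℝ} {x' y' : Fin 3 → ℝ} {v : ℝ}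
    (hx : HasDerivAt x x' v) (hy : HasDerivAt y y' v) :
    HasDerivAt (fun w => mink (x w) (y w)) (mink x' (y v) + mink (x v) y') v := by
  rw [hasDerivAt_pi] at hx hy
  have h := (((hx 0).mul (hy 0)).add ((hx 1).mul (hy 1))).sub ((hx 2).mul (hy 2))
  have e1 : mink x' (y v) + mink (x v) y' = x' 0 * y v 0 + x v 0 * y' 0 + (x' 1 * y v 1 + x v 1 * y' 1) - (x' 2 * y v 2 + x v 2 * y' 2) := by
    simp only [mink]; ring
  rw [e1]; exact h

lemma hasDerivAt_mcross {x y : ℝ → Fin 3 → ℝ} {x' y' : Fin 3 → ℝ} {v : ℝ}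
    (hx : HasDerivAt x x' v) (hy : HasDerivAt y y' v) :
    HasDerivAt (fun w => mcross (x w) (y w)) (mcross x' (y v) + mcross (x v) y') v := by
  rw [hasDerivAt_pi] at hx hy ⊢
  intro i
  fin_cases i
  · have h := ((hx 1).mul (hy 2)).sub ((hx 2).mul (hy 1))
    convert h using 1
    · funext w; rfl
    · simp only [Pi.add_apply, mcross]; simp; ring
  · have h := ((hx 2).mul (hy 0)).sub ((hx 0).mul (hy 2))
    convert h using 1
    · funext w; rfl
    · simp only [Pi.add_apply, mcross]; simp; ring
  · have h := ((hx 1).mul (hy 0)).sub ((hx 0).mul (hy 1))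
    convert h using 1
    · funext w; rfl
    · simp only [Pi.add_apply, mcross]; simp; ring

lemma mnorm_of_sq {x : Fin 3 → ℝ} {c : ℝ} (hc : 0 ≤ c) (h : mink x x = c ^ 2) : mnorm x = c := by
  rw [mnorm, h, abs_of_nonneg (sq_nonneg c), Real.sqrt_sq hc]
lemma mnorm_of_neg_sq {x : Fin 3 → ℝ} {c : ℝ} (hc : 0 ≤ c) (h : mink x x = -(c ^ 2)) :
    mnorm x = c := by
  rw [mnorm, h, abs_neg, abs_of_nonneg (sq_nonneg c), Real.sqrt_sq hc]

lemma tanh_sq_lt_one (ξ : ℝ) : Real.tanh ξ ^ 2 < 1 := by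
  have hc := Real.cosh_pos ξ
  rw [Real.tanh_eq_sinh_div_cosh, div_pow, Real.sinh_sq]
  rw [div_lt_one (by positivity)]
  nlinarith

lemma main_algebra (A m k : ℝ) (F W F2 F3 S2 V1 V2 V3 Tv Bv Dv : Fin 3 → ℝ)
    (κv τv : ℝ)
    (hA : 0 < A) (hm : m ^ 2 < 1) (hmk : m * k < 1) (hk2 : 1 < k ^ 2)
    (cFF : mink F F = 1) (cWW : mink W W = 1) (cFW : mink F W = 0)
    (cFF2 : mink F F2 = -1) (cWF2 : mink W F2 = 0)
    (ck : k = mdet F W F2)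
    (cWF3 : mink W F3 = -mink F2 F2)
    (hS : S2 = mcross F W)
    (hV1 : V1 = A • F + (A * m) • S2)
    (hV2 : V2 = A • W + (A * m) • mcross F F2)
    (hV3 : V3 = A • F2 + (A * m) • (mcross W F2 + mcross F F3))
    (hκv : κv = mnorm (mcross V1 V2) / (mink V1 V1) ^ (3/2 : ℝ))
    (hτv : τv = mdet V1 V2 V3 / (mnorm (mcross V1 V2)) ^ 2)
    (hTv : Tv = (mnorm V1)⁻¹ • V1)
    (hBv : Bv = mcross W Tv)
    (hDv : Dv = -τv • Tv + κv • Bv) :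
    mink Dv Dv > 0 ∧ Dv ≠ 0 ∧
      (mnorm Dv)⁻¹ • Dv = (Real.sqrt (k ^ 2 - 1))⁻¹ • (-k • F - S2) := by
  have hA0 : A ≠ 0 := ne_of_gt hA
  have hq : (0:ℝ) < 1 - m ^ 2 := by linarith
  have hq0 : (0:ℝ) ≤ 1 - m ^ 2 := le_of_lt hq
  have hq0' : (1 - m ^ 2) ≠ 0 := ne_of_gt hq
  have hP : (0:ℝ) < 1 - m * k := by linarith
  have hP0 : (1 - m * k) ≠ 0 := ne_of_gt hP
  have hsq : 0 < Real.sqrt (1 - m ^ 2) := Real.sqrt_pos.mpr hq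
  have hsq0 : Real.sqrt (1 - m ^ 2) ≠ 0 := ne_of_gt hsq
  have hk2' : (0:ℝ) < k ^ 2 - 1 := by linarith
  have hsk : 0 < Real.sqrt (k ^ 2 - 1) := Real.sqrt_pos.mpr hk2'
  have hsk0 : Real.sqrt (k ^ 2 - 1) ≠ 0 := ne_of_gt hsk
  -- basic scalar facts
  have cWF : mink W F = 0 := by rw [mink_comm]; exact cFW
  have cSS : mink S2 S2 = -1 := by rw [hS, mink_mcross_mcross, cFW, cFF, cWW]; ring
  have cSF : mink S2 F = 0 := by rw [hS, mink_mcross_self_left]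
  have cFS : mink F S2 = 0 := by rw [mink_comm]; exact cSF
  have cSW : mink S2 W = 0 := by rw [hS, mink_mcross_self_right]
  have cWS : mink W S2 = 0 := by rw [mink_comm]; exact cSW
  -- cross product table
  have crossFW : mcross F W = S2 := hS.symm
  have crossFS : mcross F S2 = W := by
    rw [hS, mcross_triple, cFF, cFW, one_smul, zero_smul, sub_zero]
  have crossWS : mcross W S2 = -F := by
    rw [hS, mcross_triple, cWF, cWW, one_smul, zero_smul, zero_sub]
  have crossSF : mcross S2 F = -W := by rw [mcross_anticomm, crossFS]
  have crossSW : mcross S2 W = F := by rw [mcross_anticomm, crossWS, neg_neg]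
  have crossWF : mcross W F = -S2 := by rw [mcross_anticomm, crossFW]
  have detFWS : mdet F W S2 = -1 := by
    rw [← mink_mcross_mdet, ← hS]; exact cSS
  have kS : mink S2 F2 = k := by rw [ck, ← mink_mcross_mdet, ← hS]
  -- decomposition of F2
  have hF2eq : F2 = -F - k • S2 := by
    have hc := mdet_cramer F W S2 F2
    rw [detFWS, crossWS, crossSF, crossFW] at hc
    have e1 : mink F2 F = -1 := by rw [mink_comm]; exact cFF2
    have e2 : mink F2 W = 0 := by rw [mink_comm]; exact cWF2
    have e3 : mink F2 S2 = k := by rw [mink_comm]; exact kS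
    rw [e1, e2, e3] at hc
    have hc2 : -F2 = F + k • S2 := by
      rw [neg_one_smul] at hc; rw [hc]; match_scalars <;> ring
    have := neg_eq_iff_eq_neg.mp hc2
    rw [this]; match_scalars <;> ring
  have cF2F2 : mink F2 F2 = 1 - k ^ 2 := by
    rw [hF2eq]
    simp only [mink_sub_left, mink_sub_right, mink_neg_left, mink_neg_right,
      mink_smul_left, mink_smul_right, cFF, cFS, cSF, cSS]
    ring
  have cWF3' : mink W F3 = k ^ 2 - 1 := by rw [cWF3, cF2F2]; ring
  have crossFF2 : mcross F F2 = -(k • W) := by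
    rw [hF2eq, mcross_sub_right, mcross_neg_right, mcross_smul_right, mcross_self,
      crossFS, neg_zero, zero_sub]
  have crossWF2 : mcross W F2 = S2 + k • F := by
    rw [hF2eq, mcross_sub_right, mcross_neg_right, mcross_smul_right, crossWF, crossWS,
      neg_neg, smul_neg, sub_neg_eq_add]
  -- V2 simplified
  have hV2' : V2 = (A * (1 - m * k)) • W := by
    rw [hV2, crossFF2]; match_scalars <;> ring
  -- X = V1 × V2
  have hX : mcross V1 V2 = (A ^ 2 * (1 - m * k) * m) • F + (A ^ 2 * (1 - m * k)) • S2 := by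
    rw [hV1, hV2', mcross_add_left, mcross_smul_left, mcross_smul_left,
      mcross_smul_right, mcross_smul_right, crossFW, crossSW]
    match_scalars <;> ring
  -- scalar quantities
  have minkV1 : mink V1 V1 = A ^ 2 * (1 - m ^ 2) := by
    rw [hV1]
    simp only [mink_add_left, mink_add_right, mink_smul_left, mink_smul_right,
      cFF, cFS, cSF, cSS]
    ring
  have mnormV1 : mnorm V1 = A * Real.sqrt (1 - m ^ 2) := by
    refine mnorm_of_sq (by positivity) ?_
    rw [minkV1, mul_pow, Real.sq_sqrt hq0]
  have minkX : mink (mcross V1 V2) (mcross V1 V2) =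
      -((A ^ 2 * (1 - m * k) * Real.sqrt (1 - m ^ 2)) ^ 2) := by
    rw [hX]
    simp only [mink_add_left, mink_add_right, mink_smul_left, mink_smul_right,
      cFF, cFS, cSF, cSS]
    rw [mul_pow, mul_pow, Real.sq_sqrt hq0]
    ring
  have mnormX : mnorm (mcross V1 V2) = A ^ 2 * (1 - m * k) * Real.sqrt (1 - m ^ 2) := by
    refine mnorm_of_neg_sq (by positivity) minkX
  -- determinant
  have hFxF3 : mink F (mcross F F3) = 0 := by rw [mink_comm, mink_mcross_self_left]
  have hSxF3 : mink S2 (mcross F F3) = 1 - k ^ 2 := by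
    rw [hS, mink_mcross_mcross, cFW, cFF, cWF3']; ring
  have detV : mdet V1 V2 V3 = A ^ 3 * (1 - m * k) ^ 2 * (k - m) := by
    rw [← mink_mcross_mdet, hX, hV3, crossWF2]
    simp only [mink_add_left, mink_add_right, mink_smul_left, mink_smul_right,
      cFF, cFS, cSF, cSS, cFF2, kS, hFxF3, hSxF3]
    ring
  -- κ and τ values
  have κeq : κv = (1 - m * k) / (A * (1 - m ^ 2)) := by
    rw [hκv, mnormX, minkV1]
    have hrp : (A ^ 2 * (1 - m ^ 2)) ^ (3/2 : ℝ)
        = (A ^ 2 * (1 - m ^ 2)) * Real.sqrt (A ^ 2 * (1 - m ^ 2)) := by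
      rw [show (3/2 : ℝ) = 1 + 1/2 by norm_num, Real.rpow_add (by positivity),
        Real.rpow_one, ← Real.sqrt_eq_rpow]
    have hsq2 : Real.sqrt (A ^ 2 * (1 - m ^ 2)) = A * Real.sqrt (1 - m ^ 2) := by
      rw [show A ^ 2 * (1 - m ^ 2) = (A * Real.sqrt (1 - m ^ 2)) ^ 2 by
        rw [mul_pow, Real.sq_sqrt hq0], Real.sqrt_sq (by positivity)]
    rw [hrp, hsq2]
    field_simp
  have τeq : τv = (k - m) / (A * (1 - m ^ 2)) := by
    rw [hτv, detV, mnormX]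
    have : (A ^ 2 * (1 - m * k) * Real.sqrt (1 - m ^ 2)) ^ 2
        = A ^ 4 * (1 - m * k) ^ 2 * (1 - m ^ 2) := by
      rw [mul_pow, mul_pow, Real.sq_sqrt hq0]; ring
    rw [this]
    field_simp
  -- the Darboux vector
  have hDU : Dv = (A * Real.sqrt (1 - m ^ 2))⁻¹ • (-k • F - S2) := by
    rw [hDv, hTv, hBv, hTv, mnormV1, hV1, κeq, τeq,
      mcross_smul_right, mcross_add_right, mcross_smul_right, mcross_smul_right,
      crossWF, crossWS]
    match_scalars
    · field_simp; ring
    · field_simp; ring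
  have minkD : mink Dv Dv = ((A * Real.sqrt (1 - m ^ 2))⁻¹) ^ 2 * (k ^ 2 - 1) := by
    rw [hDU]
    simp only [mink_smul_left, mink_smul_right, mink_sub_left, mink_sub_right,
      mink_neg_left, mink_neg_right, cFF, cFS, cSF, cSS]
    ring
  have pos1 : mink Dv Dv > 0 := by
    rw [minkD]; positivity
  refine ⟨pos1, ?_, ?_⟩
  · intro h
    rw [h, mink_zero_left] at pos1
    exact lt_irrefl 0 pos1
  · have mnormD : mnorm Dv = (A * Real.sqrt (1 - m ^ 2))⁻¹ * Real.sqrt (k ^ 2 - 1) := by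
      refine mnorm_of_sq (by positivity) ?_
      rw [minkD, mul_pow, Real.sq_sqrt (le_of_lt hk2')]
    rw [mnormD, hDU, smul_smul]
    congr 1
    field_simp

/-- the de Sitter Darboux indicatrix D/‖D‖ of the space-like Bertrand
curve γ corresponding to f equals the de Sitter evolute
d_f(v) = (−κ_g(v)·f(v) − s(v))/√(κ_g(v)² − 1), where D = −τ·T + κ·B is the Darboux
vector; moreover D is space-like and non-zero. -/
theorem deSitter_darboux_indicatrix_eq_evolute
    (a b : ℝ) (I : Set ℝ) (hI : I = Set.Ioo a b) (h0 : (0:ℝ) ∈ I)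
    (f : ℝ → Fin 3 → ℝ) (hf : ContDiff ℝ (⊤ : ℕ∞) f)
    (hf1 : ∀ v ∈ I, mink (f v) (f v) = 1)
    (hf2 : ∀ v ∈ I, mink (deriv f v) (deriv f v) = 1)
    (κg : ℝ → ℝ) (hκg : ∀ v, κg v = mdet (f v) (deriv f v) (deriv (deriv f) v))
    (A ξ : ℝ) (hA : 0 < A)
    (hξκ : ∀ v ∈ I, Real.tanh ξ * κg v < 1)
    (γ : ℝ → Fin 3 → ℝ)
    (hγ : ∀ v, γ v = A • (∫ w in (0:ℝ)..v, f w) +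
        (A * Real.tanh ξ) • (∫ w in (0:ℝ)..v, mcross (f w) (deriv f w)))
    (κ τ : ℝ → ℝ)
    (hκdef : ∀ v, κ v = mnorm (mcross (deriv γ v) (deriv (deriv γ) v)) /
        (mink (deriv γ v) (deriv γ v)) ^ (3/2 : ℝ))
    (hτdef : ∀ v, τ v =
        mdet (deriv γ v) (deriv (deriv γ) v) (deriv (deriv (deriv γ)) v) /
        (mnorm (mcross (deriv γ v) (deriv (deriv γ) v))) ^ 2)
    (hκg2 : ∀ v ∈ I, κg v ^ 2 > 1)
    (s : ℝ → Fin 3 → ℝ) (hs : ∀ v, s v = mcross (f v) (deriv f v))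
    (T N B D : ℝ → Fin 3 → ℝ)
    (hT : ∀ v, T v = (mnorm (deriv γ v))⁻¹ • deriv γ v)
    (hN : ∀ v, N v = deriv f v)
    (hB : ∀ v, B v = mcross (N v) (T v))
    (hD : ∀ v, D v = -(τ v) • T v + κ v • B v) :
    ∀ v ∈ I,
      mink (D v) (D v) > 0 ∧ D v ≠ 0 ∧
      (mnorm (D v))⁻¹ • D v =
        (Real.sqrt (κg v ^ 2 - 1))⁻¹ • (-(κg v) • f v - s v) := by
  -- smoothness chain
  have hfsm : ContDiff ℝ (⊤ : ℕ∞) f := hf.of_le (by simp)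
  obtain ⟨hfd, hsm1⟩ := contDiff_infty_iff_deriv.mp hfsm
  obtain ⟨hF1d, hsm2⟩ := contDiff_infty_iff_deriv.mp hsm1
  obtain ⟨hF2d, _⟩ := contDiff_infty_iff_deriv.mp hsm2
  have hfc : Continuous f := hfd.continuous
  have hF1c : Continuous (deriv f) := hF1d.continuous
  have hdf : ∀ w, HasDerivAt f (deriv f w) w := fun w => (hfd w).hasDerivAt
  have hdF1 : ∀ w, HasDerivAt (deriv f) (deriv (deriv f) w) w := fun w => (hF1d w).hasDerivAt
  have hdF2 : ∀ w, HasDerivAt (deriv (deriv f)) (deriv (deriv (deriv f)) w) w :=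
    fun w => (hF2d w).hasDerivAt
  -- continuity of the integrand w ↦ f(w) × f'(w)
  have hsc : Continuous (fun w => mcross (f w) (deriv f w)) := by
    apply continuous_pi
    intro i
    fin_cases i <;> simp only [mcross, Matrix.cons_val_zero, Matrix.cons_val_one,
      Matrix.head_cons, Matrix.cons_val_two, Matrix.tail_cons] <;>
      exact (((continuous_apply _).comp hfc).mul ((continuous_apply _).comp hF1c)).sub
        (((continuous_apply _).comp hfc).mul ((continuous_apply _).comp hF1c))
  -- first derivative of γ
  have hdγ : ∀ w, HasDerivAt γ
      (A • f w + (A * Real.tanh ξ) • mcross (f w) (deriv f w)) w := by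
    intro w
    have h1 : HasDerivAt (fun u => ∫ x in (0:ℝ)..u, f x) (f w) w :=
      intervalIntegral.integral_hasDerivAt_right (hfc.intervalIntegrable _ _)
        (hfc.stronglyMeasurableAtFilter _ _) hfc.continuousAt
    have h2 : HasDerivAt (fun u => ∫ x in (0:ℝ)..u, mcross (f x) (deriv f x))
        (mcross (f w) (deriv f w)) w :=
      intervalIntegral.integral_hasDerivAt_right (hsc.intervalIntegrable _ _)
        (hsc.stronglyMeasurableAtFilter _ _) hsc.continuousAt
    have hγfun : γ = fun u => A • (∫ x in (0:ℝ)..u, f x) +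
        (A * Real.tanh ξ) • (∫ x in (0:ℝ)..u, mcross (f x) (deriv f x)) := funext hγ
    rw [hγfun]
    exact (h1.const_smul A).add (h2.const_smul (A * Real.tanh ξ))
  have Edg : deriv γ = fun w => A • f w + (A * Real.tanh ξ) • mcross (f w) (deriv f w) :=
    funext fun w => (hdγ w).deriv
  -- second derivative of γ
  have hdγ2 : ∀ w, HasDerivAt (deriv γ)
      (A • deriv f w + (A * Real.tanh ξ) • mcross (f w) (deriv (deriv f) w)) w := by
    intro w
    rw [Edg]
    have h3 := ((hdf w).const_smul A).add
      ((hasDerivAt_mcross (hdf w) (hdF1 w)).const_smul (A * Real.tanh ξ))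
    rw [mcross_self, zero_add] at h3
    exact h3
  have Edg2 : deriv (deriv γ) =
      fun w => A • deriv f w + (A * Real.tanh ξ) • mcross (f w) (deriv (deriv f) w) :=
    funext fun w => (hdγ2 w).deriv
  -- third derivative of γ (pointwise)
  have Edg3 : ∀ w, deriv (deriv (deriv γ)) w = A • deriv (deriv f) w +
      (A * Real.tanh ξ) • (mcross (deriv f w) (deriv (deriv f) w) +
        mcross (f w) (deriv (deriv (deriv f)) w)) := by
    intro w
    have h3 : HasDerivAt
        (fun u => A • deriv f u + (A * Real.tanh ξ) • mcross (f u) (deriv (deriv f) u))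
        (A • deriv (deriv f) w + (A * Real.tanh ξ) •
          (mcross (deriv f w) (deriv (deriv f) w) +
            mcross (f w) (deriv (deriv (deriv f)) w))) w :=
      ((hdF1 w).const_smul A).add
        ((hasDerivAt_mcross (hdf w) (hdF2 w)).const_smul (A * Real.tanh ξ))
    rw [← Edg2] at h3
    exact h3.deriv
  -- vanishing derivative of locally constant functions
  have hIopen : IsOpen I := by rw [hI]; exact isOpen_Ioo
  have keyzero : ∀ (g gd : ℝ → ℝ) (c : ℝ), (∀ u, HasDerivAt g (gd u) u) →
      (∀ u ∈ I, g u = c) → ∀ u ∈ I, gd u = 0 := by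
    intro g gd c hg hgc u hu
    have h1 : g =ᶠ[nhds u] fun _ => c := by
      filter_upwards [hIopen.mem_nhds hu] with z hz using hgc z hz
    have h2 := h1.deriv_eq
    rw [(hg u).deriv, deriv_const] at h2
    exact h2
  -- differential consequences of the frame equations
  have cFW : ∀ w ∈ I, mink (f w) (deriv f w) = 0 := by
    intro w hw
    have h := keyzero _ _ 1 (fun u => hasDerivAt_mink (hdf u) (hdf u)) hf1 w hw
    have h2 : mink (deriv f w) (f w) = mink (f w) (deriv f w) := mink_comm _ _
    rw [h2] at h
    linarith
  have cFF2 : ∀ w ∈ I, mink (f w) (deriv (deriv f) w) = -1 := by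
    intro w hw
    have h := keyzero _ _ 0 (fun u => hasDerivAt_mink (hdf u) (hdF1 u)) cFW w hw
    have h2 := hf2 w hw
    linarith
  have cWF2 : ∀ w ∈ I, mink (deriv f w) (deriv (deriv f) w) = 0 := by
    intro w hw
    have h := keyzero _ _ 1 (fun u => hasDerivAt_mink (hdF1 u) (hdF1 u)) hf2 w hw
    have h2 : mink (deriv (deriv f) w) (deriv f w)
        = mink (deriv f w) (deriv (deriv f) w) := mink_comm _ _
    rw [h2] at h
    linarith
  have cWF3 : ∀ w ∈ I, mink (deriv f w) (deriv (deriv (deriv f)) w) =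
      -mink (deriv (deriv f) w) (deriv (deriv f) w) := by
    intro w hw
    have h := keyzero _ _ 0 (fun u => hasDerivAt_mink (hdF1 u) (hdF2 u)) cWF2 w hw
    have h2 : mink (deriv (deriv f) w) (deriv (deriv f) w) +
        mink (deriv f w) (deriv (deriv (deriv f)) w) = 0 := h
    linarith
  -- conclude by the algebraic lemma
  intro v hv
  refine main_algebra A (Real.tanh ξ) (κg v) (f v) (deriv f v) (deriv (deriv f) v)
    (deriv (deriv (deriv f)) v) (s v) (deriv γ v) (deriv (deriv γ) v)
    (deriv (deriv (deriv γ)) v) (T v) (B v) (D v) (κ v) (τ v) hA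
    (_root_.tanh_sq_lt_one ξ) (hξκ v hv) (hκg2 v hv) (hf1 v hv) (hf2 v hv) (cFW v hv)
    (cFF2 v hv) (cWF2 v hv) (hκg v) (cWF3 v hv) (hs v) ?_ ?_ (Edg3 v)
    (hκdef v) (hτdef v) (hT v) ?_ (hD v)
  · rw [Edg]
    rw [hs v]
  · rw [Edg2]
  · rw [hB v, hN v]
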